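/- Every factor of w of length at most 2029 is a factor of the finite word f⁷(u₀), where u₀ = 23141121142 and f⁷ denotes the 7-fold iterate of f (so that |f⁷(u₀)| = 11·3⁷ = 24057). -/

import Mathlib

/-- The four-letter alphabet `A₄ = {1,2,3,4}`; the value `k : Fin 4` represents letter `k+1`. -/
abbrev A4 := Fin 4

/-- The morphism `f` on letters: `f(1)=121, f(2)=123, f(3)=141, f(4)=142`
(letters `1,2,3,4` encoded as `0,1,2,3`). -/
def fm : A4 → List A4
  | 0 => [0, 1, 0]
  | 1 => [0, 1, 2]
  | 2 => [0, 3, 0]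
  | 3 => [0, 3, 1]

/-- The morphism `f` extended to words by concatenation. -/
def fw (u : List A4) : List A4 := u.flatMap fm

/-- The fixed point `w` of `f` starting with the letter `1`: since `|f^k(1)| = 3^k` and each
`f^k(1)` is a prefix of `f^(k+1)(1)`, the `n`-th letter of `w` is the `n`-th letter of
`f^(n+1)(1)`. -/
def w (n : ℕ) : A4 := ((fw^[n + 1]) [0]).getD n 0

/-- The finite word `t` occurs at position `i` in the infinite word `x`. -/
def OccursAt {α : Type*} (t : List α) (x : ℕ → α) (i : ℕ) : Prop :=
  t = (List.range t.length).map fun k => x (i + k)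

/-- The finite word `v` is a factor of the infinite word `x`. -/
def FactorOf {α : Type*} (v : List α) (x : ℕ → α) : Prop :=
  ∃ i, OccursAt v x i

/-- The finite word `v` has period `q ≥ 1`: `v(j) = v(j+q)` whenever `0 ≤ j < |v| - q`. -/
def HasPeriod {α : Type*} (v : List α) (q : ℕ) : Prop :=
  1 ≤ q ∧ ∀ j, j + q < v.length → v[j]? = v[j + q]?

/-- A word lies in `ker ψ` if each letter of `A₄` occurs in it a number of times
divisible by `4`. -/
def InKerPsi (u : List A4) : Prop := ∀ a : A4, 4 ∣ u.count a

/-- `q` is a kernel period of `v`: `1 ≤ q ≤ |v|`, `v` has period `q`, and the prefix of `v`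
of length `q` lies in `ker ψ`. -/
def KernelPeriod (v : List A4) (q : ℕ) : Prop :=
  q ≤ v.length ∧ HasPeriod v q ∧ InKerPsi (v.take q)


/-!
Since `w = f^k(w)`, the factor of `w` of length `L` at position `i` is a factor of `f^k`
applied to the factor of length `n` at position `⌊i / 3^k⌋`, as soon as
`i mod 3^k + L ≤ 3^k n`. With `k = 7` and `n = 2` this covers every `L ≤ 2029`, because
`2029 + 3^7 - 1 ≤ 2 · 3^7`, so it suffices that every factor of length two occurs in `u₀`.
With `k = 1` and `n = 2`, every factor of length two is a factor of the image of one further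
left; by strong induction on the position they all lie in an explicit set of eight words
closed under this operation, each of which occurs in `u₀`.
-/

namespace List

section UniformMorphism

variable {α β : Type*} {f : α → List β} {d : ℕ}

theorem length_flatMap_of_length_eq (hf : ∀ a, (f a).length = d) (l : List α) :
    (l.flatMap f).length = d * l.length := by
  simp [length_flatMap, hf, mul_comm]

theorem drop_mul_flatMap_of_length_eq (hf : ∀ a, (f a).length = d) (l : List α) (n : ℕ) :
    (l.flatMap f).drop (d * n) = (l.drop n).flatMap f := by
  induction n generalizing l with
  | zero => simp
  | succ n ih =>
    cases l with
    | nil => simp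
    | cons a l =>
      have hsplit : d * (n + 1) = (f a).length + d * n := by rw [hf]; ring
      rw [flatMap_cons, hsplit, drop_length_add_append, ih]
      rfl

theorem take_mul_flatMap_of_length_eq (hf : ∀ a, (f a).length = d) (l : List α) (n : ℕ) :
    (l.flatMap f).take (d * n) = (l.take n).flatMap f := by
  induction n generalizing l with
  | zero => simp
  | succ n ih =>
    cases l with
    | nil => simp
    | cons a l =>
      have hsplit : d * (n + 1) = (f a).length + d * n := by rw [hf]; ring
      rw [flatMap_cons, hsplit, take_length_add_append, ih]
      rfl

end UniformMorphism

section Iterate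

variable {α : Type*} {f : α → List α} {d : ℕ}

theorem length_iterate_flatMap_of_length_eq (hf : ∀ a, (f a).length = d) (k : ℕ)
    (l : List α) : ((flatMap f)^[k] l).length = d ^ k * l.length := by
  induction k with
  | zero => simp
  | succ k ih =>
    rw [Function.iterate_succ_apply', length_flatMap_of_length_eq hf, ih, pow_succ']
    ring

theorem iterate_flatMap_take_drop_of_length_eq (hf : ∀ a, (f a).length = d) (k : ℕ)
    (l : List α) (q n : ℕ) :
    (flatMap f)^[k] ((l.drop q).take n) =
      (((flatMap f)^[k] l).drop (d ^ k * q)).take (d ^ k * n) := by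
  induction k with
  | zero => simp
  | succ k ih =>
    simp only [Function.iterate_succ_apply']
    rw [ih, pow_succ', mul_assoc, mul_assoc, drop_mul_flatMap_of_length_eq hf,
      take_mul_flatMap_of_length_eq hf]

theorem IsPrefix.iterate_flatMap {l₁ l₂ : List α} (h : l₁ <+: l₂) (k : ℕ) :
    (flatMap f)^[k] l₁ <+: (flatMap f)^[k] l₂ := by
  induction k with
  | zero => exact h
  | succ k ih => simpa only [Function.iterate_succ_apply'] using ih.flatMap f

theorem IsInfix.iterate_flatMap {l₁ l₂ : List α} (h : l₁ <:+: l₂) (k : ℕ) :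
    (flatMap f)^[k] l₁ <:+: (flatMap f)^[k] l₂ := by
  induction k with
  | zero => exact h
  | succ k ih => simpa only [Function.iterate_succ_apply'] using ih.flatMap f

theorem iterate_flatMap_prefix_of_le {l : List α} (hl : l <+: l.flatMap f) {m m' : ℕ}
    (h : m ≤ m') : (flatMap f)^[m] l <+: (flatMap f)^[m'] l := by
  induction m', h using Nat.le_induction with
  | base => exact prefix_rfl
  | succ m' _ ih =>
    refine ih.trans ?_
    simpa only [Function.iterate_succ_apply] using hl.iterate_flatMap m'

end Iterate

theorem take_drop_take_drop_of_add_le {α : Type*} (l : List α) (a b T L : ℕ)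
    (h : b + L ≤ T) : (((l.drop a).take T).drop b).take L = (l.drop (a + b)).take L := by
  rw [drop_take, take_take, drop_drop, min_eq_left (by omega)]

theorem take_drop_infix {α : Type*} (l : List α) (a L : ℕ) : (l.drop a).take L <:+: l :=
  (take_prefix _ _).isInfix.trans (drop_suffix _ _).isInfix

end List

theorem fw_eq_flatMap : fw = List.flatMap fm := rfl

theorem length_fm (a : A4) : (fm a).length = 3 := by
  fin_cases a <;> rfl

theorem getElem?_iterate_fw_zero {m n : ℕ} (h : n < 3 ^ m) :
    (fw^[m] [0])[n]? = some (w n) := by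
  have hlen : ∀ k, (fw^[k] [0]).length = 3 ^ k := fun k => by
    simp [fw_eq_flatMap, List.length_iterate_flatMap_of_length_eq length_fm]
  have hprefix : ∀ {k k'}, k ≤ k' → fw^[k] [0] <+: fw^[k'] [0] := fun hk =>
    List.iterate_flatMap_prefix_of_le (l := [0]) ⟨[1, 0], rfl⟩ hk
  have hn : n < 3 ^ (n + 1) := (Nat.lt_pow_self (by norm_num)).trans
    (Nat.pow_lt_pow_right (by norm_num) n.lt_succ_self)
  have hm : n < (fw^[m] [0]).length := (hlen m).symm ▸ h
  have hn' : n < (fw^[n + 1] [0]).length := (hlen _).symm ▸ hn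
  have hw : w n = (fw^[n + 1] [0])[n] := List.getD_eq_getElem _ _ hn'
  rw [hw, List.getElem?_eq_getElem hm, (hprefix (le_max_left m (n + 1))).getElem hm,
    (hprefix (le_max_right m (n + 1))).getElem hn']

def wWindow (i L : ℕ) : List A4 := (List.range L).map fun k => w (i + k)

theorem wWindow_eq_take_drop {i L m : ℕ} (h : i + L ≤ 3 ^ m) :
    wWindow i L = ((fw^[m] [0]).drop i).take L := by
  refine List.ext_getElem? fun k => ?_
  by_cases hk : k < L
  · simp [wWindow, hk, getElem?_iterate_fw_zero (show i + k < 3 ^ m by omega)]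
  · simp [wWindow, hk]

theorem wWindow_eq_take_drop_iterate_fw {i L k n : ℕ} (h : i % 3 ^ k + L ≤ 3 ^ k * n) :
    wWindow i L = ((fw^[k] (wWindow (i / 3 ^ k) n)).drop (i % 3 ^ k)).take L := by
  obtain ⟨m, hm⟩ : ∃ m, i / 3 ^ k + n ≤ 3 ^ m := ⟨_, (Nat.lt_pow_self (by norm_num)).le⟩
  have hi : i = 3 ^ k * (i / 3 ^ k) + i % 3 ^ k := (Nat.div_add_mod i _).symm
  have hmk : i + L ≤ 3 ^ (m + k) :=
    calc i + L ≤ 3 ^ k * (i / 3 ^ k + n) := by rw [mul_add]; omega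
      _ ≤ 3 ^ k * 3 ^ m := Nat.mul_le_mul_left _ hm
      _ = 3 ^ (m + k) := by rw [pow_add, mul_comm]
  rw [wWindow_eq_take_drop hm, fw_eq_flatMap,
    List.iterate_flatMap_take_drop_of_length_eq length_fm, ← Function.iterate_add_apply,
    List.take_drop_take_drop_of_add_le _ _ _ _ _ h, ← hi, add_comm k m, ← fw_eq_flatMap,
    wWindow_eq_take_drop hmk]

def factorsOfLengthTwo : List (List A4) :=
  [[0, 0], [0, 1], [0, 3], [1, 0], [1, 2], [2, 0], [3, 0], [3, 1]]

theorem take_two_drop_fw_mem_factorsOfLengthTwo :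
    ∀ p ∈ factorsOfLengthTwo, ∀ r < 3, ((fw p).drop r).take 2 ∈ factorsOfLengthTwo := by
  decide

theorem wWindow_two_mem_factorsOfLengthTwo (j : ℕ) : wWindow j 2 ∈ factorsOfLengthTwo := by
  induction j using Nat.strong_induction_on with
  | _ j ih =>
    rcases j.eq_zero_or_pos with rfl | hj
    · decide
    · have hwin : wWindow j 2 = ((fw (wWindow (j / 3) 2)).drop (j % 3)).take 2 := by
        simpa using wWindow_eq_take_drop_iterate_fw (i := j) (k := 1) (n := 2) (by omega)
      rw [hwin]
      exact take_two_drop_fw_mem_factorsOfLengthTwo _ (ih _ (Nat.div_lt_self hj (by norm_num)))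
        _ (Nat.mod_lt _ (by norm_num))

theorem infix_u₀_of_mem_factorsOfLengthTwo :
    ∀ p ∈ factorsOfLengthTwo, p <:+: ([1, 2, 0, 3, 0, 0, 1, 0, 0, 3, 1] : List A4) := by
  decide

/-- Every factor of `w` of length at most 2029 is a factor of `f⁷(u₀)`, where
`u₀ = 23141121142` (encoded with letters `1,2,3,4` as `0,1,2,3`); `|f⁷(u₀)| = 11·3⁷ = 24057`. -/
theorem stmt16 :
    (fw^[7] ([1, 2, 0, 3, 0, 0, 1, 0, 0, 3, 1] : List A4)).length = 24057 ∧
    ∀ v : List A4, FactorOf v w → v.length ≤ 2029 →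
      v <:+: fw^[7] ([1, 2, 0, 3, 0, 0, 1, 0, 0, 3, 1] : List A4) := by
  refine ⟨by rw [fw_eq_flatMap, List.length_iterate_flatMap_of_length_eq length_fm]; rfl, ?_⟩
  rintro v ⟨i, hv⟩ hlen
  have hwin : v = ((fw^[7] (wWindow (i / 3 ^ 7) 2)).drop (i % 3 ^ 7)).take v.length := by
    refine hv.trans (wWindow_eq_take_drop_iterate_fw ?_)
    have := Nat.mod_lt i (show 0 < 3 ^ 7 by positivity)
    omega
  have hpair :=
    infix_u₀_of_mem_factorsOfLengthTwo _ (wWindow_two_mem_factorsOfLengthTwo (i / 3 ^ 7))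
  rw [hwin]
  exact (List.take_drop_infix _ _ _).trans (hpair.iterate_flatMap 7)
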